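/- Rankings with a fixed STV-signature: for an STV-signature s = (s_0, ..., s_{j-1}) (strictly decreasing, with s_{j-1} < k ≤ s_{j-2} if j ≥ 2), the number of permutations of {0,...,m-1} with STV-signature s equals the product of all c in {1,...,m-1} not belonging to {s_0,...,s_{j-2}}. -/

import Mathlib

/-- The STV-signature (for parameter `k`) of a ranking: scan the ranking,
record each left-to-right minimum, and stop as soon as a recorded element is
smaller than `k`. -/
def stvSig (k : ℕ) : List ℕ → List ℕ
  | [] => []
  | a :: t => if a < k then [a] else a :: stvSig k (t.filter (· < a))
termination_by l => l.length
decreasing_by simpa using Nat.lt_succ_of_le ((List.length_filter_le _ t.attach).trans List.length_attach.le)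

namespace Stmt8Aux

lemma stvSig_cons (k a : ℕ) (t : List ℕ) :
    stvSig k (a :: t) = if a < k then [a] else a :: stvSig k (t.filter (· < a)) := by
  rw [stvSig.eq_2]

lemma stvSig_cons_of_lt_all (k a : ℕ) {t : List ℕ} (h : ∀ x ∈ t, x < a) :
    stvSig k (a :: t) = if a < k then [a] else a :: stvSig k t := by
  rw [stvSig_cons, List.filter_eq_self.mpr (fun x hx => by simpa using h x hx)]

lemma head?_stvSig (k a : ℕ) (t : List ℕ) : (stvSig k (a :: t)).head? = some a := by
  rw [stvSig_cons]; split <;> simp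

lemma filter_erase_of_neg {p : ℕ → Bool} {b : ℕ} (hb : p b = false) (t : List ℕ) :
    (t.erase b).filter p = t.filter p := by
  induction t with
  | nil => simp
  | cons x t ih =>
    by_cases hx : x = b
    · subst hx; simp [List.filter_cons, hb]
    · rw [List.erase_cons_tail (by simp [hx])]
      simp [List.filter_cons, ih]

lemma stvSig_cons_erase (k a b : ℕ) (hab : ¬ b < a) (t : List ℕ) :
    stvSig k (a :: t.erase b) = stvSig k (a :: t) := by
  rw [stvSig_cons, stvSig_cons]
  split
  · rfl
  · rw [filter_erase_of_neg (by simpa using hab)]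

lemma erase_insertIdx {b : ℕ} : ∀ (i : ℕ) (t : List ℕ), b ∉ t → (t.insertIdx i b).erase b = t
  | 0, t, h => by simp [List.insertIdx]
  | i+1, [], h => by simp [List.insertIdx]
  | i+1, x :: t, h => by
    have hx : x ≠ b := fun e => h (by simp [e])
    rw [List.insertIdx_succ_cons, List.erase_cons_tail (by simp [hx])]
    rw [erase_insertIdx i t (fun e => h (by simp [e]))]

lemma indexOf_insertIdx {b : ℕ} : ∀ (i : ℕ) (t : List ℕ), b ∉ t → i ≤ t.length →
    (t.insertIdx i b).idxOf b = i
  | 0, t, h, hi => by simp [List.insertIdx]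
  | i+1, [], h, hi => by simp at hi
  | i+1, x :: t, h, hi => by
    have hx : x ≠ b := fun e => h (by simp [e])
    rw [List.insertIdx_succ_cons, List.idxOf_cons_ne _ (by simpa using hx),
      indexOf_insertIdx i t (fun e => h (by simp [e])) (by simpa using hi)]

lemma insertIdx_indexOf_erase {b : ℕ} : ∀ (l : List ℕ), b ∈ l →
    (l.erase b).insertIdx (l.idxOf b) b = l
  | [], h => by simp at h
  | x :: l, h => by
    by_cases hx : x = b
    · subst hx; simp [List.insertIdx]
    · rw [List.erase_cons_tail (by simp [hx]), List.idxOf_cons_ne _ (by simpa using hx),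
        List.insertIdx_succ_cons, insertIdx_indexOf_erase l (by
          cases h with
          | head => exact absurd rfl hx
          | tail _ h => exact h)]

end Stmt8Aux

namespace Stmt8Aux

lemma length_filter_perms (n : ℕ) (p : List ℕ → Bool) :
    ((List.range n).permutations.filter p).length
      = ((List.range n).permutations.toFinset.filter (fun r => p r = true)).card := by
  rw [← List.toFinset_filter,
    List.toFinset_card_of_nodup (((List.nodup_permutations _ List.nodup_range)).filter p)]

lemma range_succ_perm (m : ℕ) : (List.range (m+1)).Perm (m :: List.range m) := by
  rw [List.range_succ]
  exact List.perm_append_singleton _ _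

lemma erase_range_succ (m : ℕ) : (List.range (m+1)).erase m = List.range m := by
  rw [List.range_succ, List.erase_append_right _ (by simp), List.erase_cons_head,
    List.append_nil]

lemma card_cons (m : ℕ) (P : List ℕ → Prop) [DecidablePred P] :
    (((List.range (m+1)).permutations.toFinset).filter
        (fun r => r.head? = some m ∧ P r.tail)).card
      = (((List.range m).permutations.toFinset).filter P).card := by
  apply Finset.card_bij' (fun r _ => r.tail) (fun t _ => m :: t)
  · rintro r hr
    simp only [Finset.mem_filter, List.mem_toFinset, List.mem_permutations] at hr ⊢
    obtain ⟨hperm, hh, hP⟩ := hr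
    match r, hh with
    | a :: t, hh =>
      simp only [List.head?_cons, Option.some.injEq] at hh
      rw [hh] at hperm
      exact ⟨List.Perm.cons_inv (hperm.trans (range_succ_perm m)), hP⟩
  · rintro t ht
    simp only [Finset.mem_filter, List.mem_toFinset, List.mem_permutations] at ht ⊢
    exact ⟨(List.Perm.cons m ht.1).trans (range_succ_perm m).symm, rfl, ht.2⟩
  · rintro r hr
    simp only [Finset.mem_filter, List.mem_toFinset, List.mem_permutations] at hr
    match r, hr.2.1 with
    | a :: t, hh =>
      simp only [List.head?_cons, Option.some.injEq] at hh
      simp [hh]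
  · rintro t _; rfl

end Stmt8Aux

namespace Stmt8Aux

lemma stvSig_erase_max (k m : ℕ) {r : List ℕ} (hperm : r.Perm (List.range (m+1)))
    (hh : r.head? ≠ some m) : stvSig k (r.erase m) = stvSig k r := by
  match r with
  | [] => rfl
  | a :: t =>
    have ha : a ≠ m := fun e => hh (by simp [e])
    have ham : a < m + 1 := by
      simpa using (hperm.mem_iff).mp List.mem_cons_self
    rw [List.erase_cons_tail (by simp [ha])]
    exact stvSig_cons_erase k a m (by omega) t

lemma card_notmax (k m : ℕ) (s : List ℕ) (hm : m ∉ s) :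
    ((List.range (m+1)).permutations.toFinset.filter (fun r => stvSig k r = s)).card
      = m * ((List.range m).permutations.toFinset.filter (fun r => stvSig k r = s)).card := by
  have key : ((List.range (m+1)).permutations.toFinset.filter (fun r => stvSig k r = s)).card
      = (((List.range m).permutations.toFinset.filter (fun r => stvSig k r = s))
          ×ˢ Finset.Ioc 0 m).card := by
    refine Finset.card_bij' (fun r _ => (r.erase m, r.idxOf m))
      (fun p _ => p.1.insertIdx p.2 m) ?hi ?hj ?left ?right
    case hi =>
      rintro r hr
      simp only [Finset.mem_filter, List.mem_toFinset, List.mem_permutations] at hr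
      obtain ⟨hperm, hsig⟩ := hr
      have hmr : m ∈ r := (hperm.mem_iff).mpr (by simp)
      have hh : r.head? ≠ some m := by
        match r, hmr with
        | a :: t, _ =>
          simp only [List.head?_cons, ne_eq, Option.some.injEq]
          rintro rfl
          exact hm (hsig ▸ List.mem_of_mem_head? (by rw [head?_stvSig]; rfl))
      simp only [Finset.mem_product, Finset.mem_filter, List.mem_toFinset,
        List.mem_permutations, Finset.mem_Ioc]
      refine ⟨⟨?_, ?_⟩, ?_, ?_⟩
      · have := hperm.erase m
        rwa [erase_range_succ] at this
      · rw [stvSig_erase_max k m hperm hh, hsig]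
      · match r, hmr, hh with
        | a :: t, _, hh =>
          have ha : a ≠ m := by simpa using hh
          rw [List.idxOf_cons_ne _ (by simpa using ha)]
          omega
      · have := List.idxOf_lt_length_iff.mpr hmr
        rw [hperm.length_eq, List.length_range] at this
        omega
    case hj =>
      rintro ⟨t, i⟩ hp
      simp only [Finset.mem_product, Finset.mem_filter, List.mem_toFinset,
        List.mem_permutations, Finset.mem_Ioc] at hp
      obtain ⟨⟨hperm, hsig⟩, hi0, him⟩ := hp
      have hlen : t.length = m := by rw [hperm.length_eq, List.length_range]
      have hmt : m ∉ t := fun h => by simpa using (hperm.mem_iff).mp h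
      simp only [Finset.mem_filter, List.mem_toFinset, List.mem_permutations]
      constructor
      · exact (List.perm_insertIdx m t (by omega)).trans
          ((hperm.cons m).trans (range_succ_perm m).symm)
      · obtain ⟨a, t', rfl⟩ : ∃ a t', t = a :: t' := by
          cases t with
          | nil => simp at hlen; omega
          | cons a t' => exact ⟨a, t', rfl⟩
        obtain ⟨i', rfl⟩ : ∃ i', i = i' + 1 := ⟨i - 1, by omega⟩
        have ha : a < m := by simpa using (hperm.mem_iff).mp List.mem_cons_self
        have hmt' : m ∉ t' := fun h => hmt (List.mem_cons_of_mem a h)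
        rw [List.insertIdx_succ_cons, ← stvSig_cons_erase k a m (by omega),
          erase_insertIdx i' t' hmt', ← hsig]
    case left =>
      rintro r hr
      simp only [Finset.mem_filter, List.mem_toFinset, List.mem_permutations] at hr
      exact insertIdx_indexOf_erase r ((hr.1.mem_iff).mpr (List.mem_range.mpr (Nat.lt_succ_self m)))
    case right =>
      rintro ⟨t, i⟩ hp
      simp only [Finset.mem_product, Finset.mem_filter, List.mem_toFinset,
        List.mem_permutations, Finset.mem_Ioc] at hp
      obtain ⟨⟨hperm, _⟩, _, him⟩ := hp
      have hlen : t.length = m := by rw [hperm.length_eq, List.length_range]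
      have hmt : m ∉ t := fun h => by simpa using (hperm.mem_iff).mp h
      simp [erase_insertIdx i t hmt, indexOf_insertIdx i t hmt (by omega)]
  rw [key, Finset.card_product, Nat.card_Ioc]
  simp [Nat.mul_comm]

end Stmt8Aux

namespace Stmt8Aux

lemma length_filter_perms' (n k : ℕ) (s : List ℕ) :
    ((List.range n).permutations.filter (fun r => stvSig k r = s)).length
      = ((List.range n).permutations.toFinset.filter (fun r => stvSig k r = s)).card := by
  rw [length_filter_perms]
  apply congrArg Finset.card
  apply Finset.filter_congr
  intro x _
  simp

lemma main (k : ℕ) (hk : 1 ≤ k) : ∀ (m : ℕ) (s : List ℕ), s ≠ [] →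
    s.Pairwise (· > ·) → (∀ c ∈ s, c < m) → (∀ c ∈ s.dropLast, k ≤ c) →
    (∀ c, s.getLast? = some c → c < k) →
    ((List.range m).permutations.filter (fun r => stvSig k r = s)).length
      = ∏ c ∈ (Finset.Icc 1 (m - 1)).filter (fun c => c ∉ s.dropLast), c := by
  intro m
  induction m with
  | zero =>
    intro s hne _ hmem _ _
    obtain ⟨a, s', rfl⟩ := List.exists_cons_of_ne_nil hne
    exact absurd (hmem a (by simp)) (by omega)
  | succ m ih =>
    intro s hne hdec hmem hbig hlast
    obtain ⟨a, s', rfl⟩ := List.exists_cons_of_ne_nil hne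
    rw [length_filter_perms']
    simp only [Nat.add_sub_cancel]
    by_cases ham : a = m
    · subst ham
      rcases eq_or_ne s' [] with rfl | hs'
      · -- s = [a], a = m < k
        have hak : a < k := hlast a rfl
        have hcong : ∀ r ∈ (List.range (a+1)).permutations.toFinset,
            (stvSig k r = [a] ↔ (r.head? = some a ∧ (fun _ : List ℕ => True) r.tail)) := by
          intro r hr
          simp only [List.mem_toFinset, List.mem_permutations] at hr
          obtain ⟨b, t, rfl⟩ : ∃ b t, r = b :: t := by
            cases r with
            | nil => have := hr.length_eq; simp at this
            | cons b t => exact ⟨b, t, rfl⟩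
          constructor
          · intro hsig
            have : (stvSig k (b :: t)).head? = some a := by rw [hsig]; rfl
            rw [head?_stvSig] at this
            simp only [Option.some.injEq] at this
            subst this
            exact ⟨rfl, trivial⟩
          · rintro ⟨hb, -⟩
            simp only [List.head?_cons, Option.some.injEq] at hb
            subst hb
            rw [stvSig_cons, if_pos hak]
        rw [Finset.filter_congr hcong, card_cons a (fun _ => True), Finset.filter_true,
          List.toFinset_card_of_nodup (List.nodup_permutations _ List.nodup_range),
          List.length_permutations, List.length_range]
        simp only [List.dropLast_singleton, List.not_mem_nil, not_false_iff, Finset.filter_true]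
        rw [← Finset.Ico_add_one_right_eq_Icc, Finset.prod_Ico_id_eq_factorial]
      · -- s = m :: s', s' ≠ []
        have hms : k ≤ a := by
          apply hbig
          obtain ⟨c, s'', rfl⟩ := List.exists_cons_of_ne_nil hs'
          simp
        have hcong : ∀ r ∈ (List.range (a+1)).permutations.toFinset,
            (stvSig k r = a :: s' ↔
              (r.head? = some a ∧ (fun t => stvSig k t = s') r.tail)) := by
          intro r hr
          simp only [List.mem_toFinset, List.mem_permutations] at hr
          obtain ⟨b, t, rfl⟩ : ∃ b t, r = b :: t := by
            cases r with
            | nil => have := hr.length_eq; simp at this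
            | cons b t => exact ⟨b, t, rfl⟩
          have hnd : (b :: t).Nodup := (hr.nodup_iff).mpr List.nodup_range
          have htlt : ∀ x ∈ t, x < b → True := fun _ _ _ => trivial
          constructor
          · intro hsig
            have hb : b = a := by
              have : (stvSig k (b :: t)).head? = some a := by rw [hsig]; rfl
              rw [head?_stvSig] at this
              simpa using this
            subst hb
            refine ⟨rfl, ?_⟩
            rw [stvSig_cons, if_neg (by omega)] at hsig
            have hft : t.filter (· < b) = t := by
              apply List.filter_eq_self.mpr
              intro x hx
              have hx1 : x < b + 1 := by simpa using (hr.mem_iff).mp (List.mem_cons_of_mem b hx)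
              have hx2 : x ≠ b := fun e => (List.nodup_cons.mp hnd).1 (e ▸ hx)
              simpa using by omega
            rw [hft] at hsig
            simp only [List.cons.injEq, true_and] at hsig
            exact hsig
          · rintro ⟨hb, hts⟩
            simp only [List.head?_cons, Option.some.injEq] at hb
            subst hb
            rw [stvSig_cons, if_neg (by omega)]
            have hft : t.filter (· < b) = t := by
              apply List.filter_eq_self.mpr
              intro x hx
              have hx1 : x < b + 1 := by simpa using (hr.mem_iff).mp (List.mem_cons_of_mem b hx)
              have hx2 : x ≠ b := fun e => (List.nodup_cons.mp hnd).1 (e ▸ hx)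
              simpa using by omega
            rw [hft]
            simpa using hts
        rw [Finset.filter_congr hcong, card_cons a (fun t => stvSig k t = s'),
          ← length_filter_perms']
        have hlt : ∀ c ∈ s', c < a := fun c hc => (List.pairwise_cons.mp hdec).1 c hc
        have hm1 : 1 ≤ a := by
          obtain ⟨c, s'', rfl⟩ := List.exists_cons_of_ne_nil hs'
          have := hlt c (by simp)
          omega
        rw [ih s' hs' (hdec.sublist (List.sublist_cons_self a s'))
          (fun c hc => hlt c hc)
          (fun c hc => hbig c (by
            rw [List.dropLast_cons_of_ne_nil hs']
            exact List.mem_cons_of_mem a hc))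
          (fun c hc => hlast c (by
            obtain ⟨d, s'', rfl⟩ := List.exists_cons_of_ne_nil hs'
            rw [List.getLast?_cons_cons]
            exact hc))]
        apply Finset.prod_congr _ (fun _ _ => rfl)
        ext c
        simp only [Finset.mem_filter, Finset.mem_Icc,
          List.dropLast_cons_of_ne_nil hs', List.mem_cons]
        constructor
        · rintro ⟨⟨h1, h2⟩, h3⟩
          refine ⟨⟨h1, by omega⟩, fun h => ?_⟩
          rcases h with rfl | h
          · omega
          · exact h3 h
        · rintro ⟨⟨h1, h2⟩, h3⟩
          have hca : c ≠ a := fun e => h3 (Or.inl e)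
          exact ⟨⟨h1, by omega⟩, fun hm => h3 (Or.inr hm)⟩
    · -- a ≠ m
      have haml : a < m := by
        have := hmem a (by simp)
        omega
      have hlt : ∀ c ∈ s', c < a := fun c hc => (List.pairwise_cons.mp hdec).1 c hc
      have hms : m ∉ a :: s' := by
        intro h
        rcases List.mem_cons.mp h with h | h
        · omega
        · have := hlt m h
          omega
      rw [card_notmax k m _ hms, ← length_filter_perms',
        ih (a :: s') (by simp) hdec
          (fun c hc => by
            rcases List.mem_cons.mp hc with rfl | hc
            · omega
            · have := hlt c hc
              omega)
          hbig hlast]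
      have hm1 : 1 ≤ m := by omega
      have hicc : Finset.Icc 1 m = insert m (Finset.Icc 1 (m - 1)) := by
        ext c
        simp only [Finset.mem_Icc, Finset.mem_insert]
        omega
      have hmd : m ∉ (a :: s').dropLast :=
        fun h => hms (List.dropLast_sublist _ |>.subset h)
      rw [hicc, Finset.filter_insert, if_pos hmd, Finset.prod_insert (by
        simp only [Finset.mem_filter, Finset.mem_Icc]
        omega)]

end Stmt8Aux



/-- The number of permutations of `{0, …, m-1}` with a given STV-signature
`s` (strictly decreasing, all elements but the last being `≥ k`, the last
being `< k`) equals the product of all `c ∈ {1, …, m-1}` not belonging to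
`s` with its last element removed. -/
theorem stmt8 (m k : ℕ) (hk : 1 ≤ k) (hkm : k ≤ m) (s : List ℕ)
    (hne : s ≠ []) (hdec : s.Chain' (· > ·)) (hmem : ∀ c ∈ s, c < m)
    (hbig : ∀ c ∈ s.dropLast, k ≤ c)
    (hlastlt : ∀ c, s.getLast? = some c → c < k) :
    ((List.range m).permutations.filter (fun r => stvSig k r = s)).length
      = ∏ c ∈ (Finset.Icc 1 (m - 1)).filter (fun c => c ∉ s.dropLast), c :=
  Stmt8Aux.main k hk m s hne (List.isChain_iff_pairwise.mp hdec) hmem hbig hlastlt
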